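/- Let d ≥ 3 and let λ = 4k for some integer 1 ≤ k ≤ d-1 (a hyperbolic threshold). Let M_λ = {ξ ∈ [-1/2, 1/2)^d : h₀(ξ) = λ}. Then ∫_{M_λ} |∇h₀(ξ)|^{-1} dH^{d-1}(ξ) < ∞, where H^{d-1} is the (d-1)-dimensional Hausdorff measure; in particular, the set Σ_λ = {ξ ∈ M_λ : ∇h₀(ξ) = 0} (which is finite) has measure zero both for H^{d-1} restricted to M_λ and for the measure dμ = |∇h₀|^{-1} dH^{d-1} on M_λ. -/

import Mathlib

/-!
Split the box into the pieces on which every coordinate `ξ_j` stays in a fixed quarter of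
`[-1/2, 1/2]`, at distance `t_j` from the nearest zero `0` or `±1/2` of `sin (2π ·)`, and the
`i`-th coordinate has the largest `t_i`. Since `sin² a - sin² b = sin (a - b) sin (a + b)`, on such
a piece the `i`-th partial derivative of `h₀` dominates the others, so the level set is a Lipschitz
graph over the remaining coordinates, while `|∇h₀| ≳ t_i`. On the dyadic shell `t_i ≈ 2⁻ⁿ` the
piece lies over a cube of side `≈ 2⁻ⁿ` in `ℝ^(d-1)`, hence has `H^(d-1)`-measure `≲ 2^(-n(d-1))`
while `|∇h₀|⁻¹ ≲ 2ⁿ`; for `d ≥ 3` these contributions are summable. The critical points are among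
the `4^d` corners of the pieces, a finite set.
-/

open MeasureTheory

/-- The symbol `h₀(ξ) = 4 ∑_j sin²(π ξ_j)` of the discrete Laplacian. -/
noncomputable def h0E {d : ℕ} (ξ : EuclideanSpace ℝ (Fin d)) : ℝ :=
  4 * ∑ j, Real.sin (Real.pi * ξ j) ^ 2

/-- The gradient `∇h₀(ξ) = 2π(sin(2πξ_1), ..., sin(2πξ_d))`. -/
noncomputable def gradh0 {d : ℕ} (ξ : EuclideanSpace ℝ (Fin d)) :
    EuclideanSpace ℝ (Fin d) :=
  WithLp.toLp 2 (fun j => 2 * Real.pi * Real.sin (2 * Real.pi * ξ j))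

/-- The level set `M_λ = {ξ ∈ [-1/2,1/2)^d : h₀(ξ) = λ}`. -/
def Mlevel (d : ℕ) (lam : ℝ) : Set (EuclideanSpace ℝ (Fin d)) :=
  {ξ | (∀ j, -(1 / 2 : ℝ) ≤ ξ j ∧ ξ j < 1 / 2) ∧ h0E ξ = lam}

/-- The critical set `Σ_λ = {ξ ∈ M_λ : ∇h₀(ξ) = 0}`. -/
def SigmaLevel (d : ℕ) (lam : ℝ) : Set (EuclideanSpace ℝ (Fin d)) :=
  {ξ ∈ Mlevel d lam | gradh0 ξ = 0}

open Real Set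
open scoped NNReal ENNReal

section Hausdorff

variable {X Y : Type*} [MetricSpace X] [MeasurableSpace X] [BorelSpace X]
  [MetricSpace Y] [MeasurableSpace Y] [BorelSpace Y]

theorem hausdorffMeasure_le_of_dist_le_mul_dist {f : X → Y} {s : Set X} {K : ℝ≥0}
    (h : ∀ x ∈ s, ∀ y ∈ s, dist x y ≤ K * dist (f x) (f y)) {d : ℝ} (hd : 0 ≤ d) :
    μH[d] s ≤ (K : ℝ≥0∞) ^ d * μH[d] (f '' s) := by
  have hanti : AntilipschitzWith K (s.domRestrict f) :=
    AntilipschitzWith.of_le_mul_dist fun x y => h x.1 x.2 y.1 y.2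
  calc μH[d] s = μH[d] (Subtype.val '' (univ : Set s)) := by rw [image_univ, Subtype.range_coe]
    _ = μH[d] (univ : Set s) := isometry_subtype_coe.hausdorffMeasure_image (.inl hd) _
    _ ≤ (K : ℝ≥0∞) ^ d * μH[d] (s.domRestrict f '' univ) := hanti.le_hausdorffMeasure_image hd _
    _ = (K : ℝ≥0∞) ^ d * μH[d] (f '' s) := by rw [image_univ, range_domRestrict]

theorem Set.Finite.hausdorffMeasure_eq_zero {s : Set X} (hs : s.Finite) {d : ℝ} (hd : 0 < d) :
    μH[d] s = 0 :=
  have := Measure.nullSingletonClass_hausdorff X hd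
  hs.measure_zero _

end Hausdorff

theorem setLIntegral_lt_top_of_dyadic_shells {X : Type*} [MeasurableSpace X] {μ : Measure X}
    {S : Set X} {g : X → ℝ≥0∞} {φ : X → ℝ} {C : ℝ}
    (hg : ∀ x ∈ S, g x ≤ (ENNReal.ofReal (φ x))⁻¹) (hφ : ∀ x ∈ S, φ x ≤ 1)
    (hzero : μ {x ∈ S | φ x ≤ 0} = 0)
    (hshell : ∀ n : ℕ, μ {x ∈ S | (2⁻¹ : ℝ) ^ (n + 1) < φ x ∧ φ x ≤ 2⁻¹ ^ n} ≤
      ENNReal.ofReal (C * ((2⁻¹ : ℝ) ^ n) ^ 2)) :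
    ∫⁻ x in S, g x ∂μ < ∞ := by
  set shell : ℕ → Set X := fun n => {x ∈ S | (2⁻¹ : ℝ) ^ (n + 1) < φ x ∧ φ x ≤ 2⁻¹ ^ n}
  have hcover : S ⊆ {x ∈ S | φ x ≤ 0} ∪ ⋃ n, shell n := by
    intro x hx
    rcases le_or_gt (φ x) 0 with h | h
    · exact .inl ⟨hx, h⟩
    · obtain ⟨n, hn⟩ :=
        exists_nat_pow_near_of_lt_one (y := (2⁻¹ : ℝ)) h (hφ x hx) (by norm_num) (by norm_num)
      exact .inr (mem_iUnion.2 ⟨n, hx, hn⟩)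
  have hshell_int (n : ℕ) : ∫⁻ x in shell n, g x ∂μ ≤ ENNReal.ofReal (2 * C) * 2⁻¹ ^ n := by
    have hg_le : ∀ x ∈ shell n, g x ≤ ENNReal.ofReal (2 ^ (n + 1)) := by
      rintro x ⟨hx, hlow, -⟩
      have hpos : 0 < φ x := lt_trans (by positivity) hlow
      refine (hg x hx).trans ?_
      rw [← ENNReal.ofReal_inv_of_pos hpos]
      refine ENNReal.ofReal_le_ofReal ?_
      simpa using inv_anti₀ (by positivity) hlow.le
    calc ∫⁻ x in shell n, g x ∂μ ≤ ∫⁻ _ in shell n, ENNReal.ofReal (2 ^ (n + 1)) ∂μ :=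
          setLIntegral_mono measurable_const hg_le
      _ = ENNReal.ofReal (2 ^ (n + 1)) * μ (shell n) := setLIntegral_const _ _
      _ ≤ ENNReal.ofReal (2 ^ (n + 1)) * ENNReal.ofReal (C * ((2⁻¹ : ℝ) ^ n) ^ 2) := by
          gcongr; exact hshell n
      _ = ENNReal.ofReal (2 * C * 2⁻¹ ^ n) := by
          rw [← ENNReal.ofReal_mul (by positivity)]
          congr 1
          rw [pow_succ, inv_pow]
          field_simp
      _ = ENNReal.ofReal (2 * C) * 2⁻¹ ^ n := by
          rw [ENNReal.ofReal_mul' (by positivity), ENNReal.ofReal_pow (by norm_num),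
            ENNReal.ofReal_inv_of_pos (by norm_num), ENNReal.ofReal_ofNat]
  calc ∫⁻ x in S, g x ∂μ ≤ ∫⁻ x in {x ∈ S | φ x ≤ 0} ∪ ⋃ n, shell n, g x ∂μ :=
        lintegral_mono_set hcover
    _ ≤ ∫⁻ x in {x ∈ S | φ x ≤ 0}, g x ∂μ + ∫⁻ x in ⋃ n, shell n, g x ∂μ :=
        lintegral_union_le _ _ _
    _ ≤ 0 + ∑' n, ∫⁻ x in shell n, g x ∂μ := by
        rw [setLIntegral_measure_zero _ _ hzero]
        gcongr
        exact lintegral_iUnion_le _ _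
    _ ≤ ∑' n, ENNReal.ofReal (2 * C) * 2⁻¹ ^ n := by
        rw [zero_add]; exact ENNReal.tsum_le_tsum hshell_int
    _ = ENNReal.ofReal (2 * C) * 2 := by
        rw [ENNReal.tsum_mul_left, ENNReal.tsum_geometric, ENNReal.one_sub_inv_two, inv_inv]
    _ < ∞ := ENNReal.mul_lt_top ENNReal.ofReal_lt_top (by norm_num)

def dropCoord {ι : Type*} (i : ι) (ξ : EuclideanSpace ℝ ι) : {j // j ≠ i} → ℝ := fun j => ξ j

theorem hausdorffMeasure_le_of_lipschitz_graph {ι : Type*} [Fintype ι] [DecidableEq ι] (i : ι)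
    {S : Set (EuclideanSpace ℝ ι)} {K : ℝ≥0}
    (hS : ∀ ξ ∈ S, ∀ η ∈ S, dist ξ η ≤ K * dist (dropCoord i ξ) (dropCoord i η))
    {p : EuclideanSpace ℝ ι} {r : ℝ} (hr : 0 ≤ r) (hp : ∀ ξ ∈ S, ∀ j ≠ i, |ξ j - p j| ≤ r) :
    μH[(Fintype.card ι : ℝ) - 1] S ≤ ENNReal.ofReal ((K * (2 * r)) ^ (Fintype.card ι - 1)) := by
  have hcard_nat : Fintype.card {j // j ≠ i} = Fintype.card ι - 1 := by
    rw [Fintype.card_subtype_compl, Fintype.card_subtype_eq]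
  have hcard : (Fintype.card ι : ℝ) - 1 = Fintype.card {j // j ≠ i} := by
    rw [hcard_nat, Nat.cast_sub (Fintype.card_pos_iff.2 ⟨i⟩), Nat.cast_one]
  have hproj : dropCoord i '' S ⊆ Metric.closedBall (dropCoord i p) r := by
    rintro _ ⟨ξ, hξ, rfl⟩
    exact (dist_pi_le_iff hr).2 fun j => (Real.dist_eq _ _).trans_le (hp ξ hξ j j.2)
  calc μH[(Fintype.card ι : ℝ) - 1] S
      ≤ (K : ℝ≥0∞) ^ ((Fintype.card ι : ℝ) - 1) *
          μH[(Fintype.card ι : ℝ) - 1] (dropCoord i '' S) :=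
        hausdorffMeasure_le_of_dist_le_mul_dist hS (by rw [hcard]; positivity)
    _ ≤ (K : ℝ≥0∞) ^ ((Fintype.card ι : ℝ) - 1) *
        μH[(Fintype.card ι : ℝ) - 1] (Metric.closedBall (dropCoord i p) r) := by gcongr
    _ = ENNReal.ofReal ((K * (2 * r)) ^ (Fintype.card ι - 1)) := by
        rw [hcard, hausdorffMeasure_pi_real, Real.volume_pi_closedBall _ hr, ENNReal.rpow_natCast,
          hcard_nat, ← ENNReal.ofReal_coe_nnreal, ← ENNReal.ofReal_pow K.coe_nonneg,
          ← ENNReal.ofReal_mul (by positivity), ← mul_pow]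

theorem dist_le_sqrt_card_mul_of_abs_sub_le {ι : Type*} [Fintype ι] {ξ η : EuclideanSpace ℝ ι}
    {c : ℝ} (hc : 0 ≤ c) (h : ∀ j, |ξ j - η j| ≤ c) : dist ξ η ≤ √(Fintype.card ι) * c := by
  rw [EuclideanSpace.dist_eq, ← sqrt_sq hc, ← sqrt_mul (Nat.cast_nonneg _)]
  refine sqrt_le_sqrt ?_
  calc ∑ j, dist (ξ j) (η j) ^ 2 ≤ ∑ _j : ι, c ^ 2 := by
        gcongr with j
        rw [Real.dist_eq]
        exact h j
    _ = Fintype.card ι * c ^ 2 := by simp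

theorem sin_sq_sub_sin_sq (a b : ℝ) : sin a ^ 2 - sin b ^ 2 = sin (a - b) * sin (a + b) := by
  rw [sin_sub, sin_add]
  linear_combination sin b ^ 2 * sin_sq_add_cos_sq a - sin a ^ 2 * sin_sq_add_cos_sq b

theorem two_mul_abs_le_abs_sin_pi_mul {u : ℝ} (hu : |u| ≤ 1 / 2) : 2 * |u| ≤ |sin (π * u)| := by
  have h := mul_le_sin (x := π * |u|) (by positivity) (by nlinarith [pi_pos])
  rw [show 2 / π * (π * |u|) = 2 * |u| by field_simp] at h
  rcases abs_cases u with ⟨hu', -⟩ | ⟨hu', -⟩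
  · rw [hu'] at h ⊢; exact h.trans (le_abs_self _)
  · rw [hu'] at h ⊢; rw [show π * u = -(π * -u) by ring, sin_neg, abs_neg]
    exact h.trans (le_abs_self _)

theorem abs_sin_sq_sub_sin_sq_bounds {t t' : ℝ} (ht : t ∈ Icc (0 : ℝ) (1 / 4))
    (ht' : t' ∈ Icc (0 : ℝ) (1 / 4)) :
    4 * (|t - t'| * (t + t')) ≤ |sin (π * t) ^ 2 - sin (π * t') ^ 2| ∧
      |sin (π * t) ^ 2 - sin (π * t') ^ 2| ≤ π ^ 2 * (|t - t'| * (t + t')) := by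
  obtain ⟨h0, h1⟩ := ht
  obtain ⟨h0', h1'⟩ := ht'
  have hsum : |t + t'| = t + t' := abs_of_nonneg (by linarith)
  rw [sin_sq_sub_sin_sq, ← mul_sub, ← mul_add, abs_mul]
  constructor
  · have hdiff := two_mul_abs_le_abs_sin_pi_mul (u := t - t') (abs_le.2 ⟨by linarith, by linarith⟩)
    have hadd := two_mul_abs_le_abs_sin_pi_mul (u := t + t') (by rw [hsum]; linarith)
    rw [hsum] at hadd
    nlinarith [abs_nonneg (t - t')]
  · have hdiff : |sin (π * (t - t'))| ≤ π * |t - t'| := by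
      simpa [abs_mul, abs_of_pos pi_pos] using abs_sin_le_abs (x := π * (t - t'))
    have hadd : |sin (π * (t + t'))| ≤ π * (t + t') := by
      simpa [abs_mul, abs_of_pos pi_pos, hsum] using abs_sin_le_abs (x := π * (t + t'))
    calc |sin (π * (t - t'))| * |sin (π * (t + t'))| ≤ (π * |t - t'|) * (π * (t + t')) :=
          mul_le_mul hdiff hadd (abs_nonneg _) (by positivity)
      _ = π ^ 2 * (|t - t'| * (t + t')) := by ring

/-- The quarter `m` of `[-1/2, 1/2]` is `{x | quarterCoord m x ∈ [0, 1/4]}`; on it,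
`quarterCoord m x` is the distance from `x` to the zero `quarterCenter m` of `sin (2π ·)`. -/
noncomputable def quarterCoord : Fin 4 → ℝ → ℝ
  | 0, x => x + 1 / 2
  | 1, x => -x
  | 2, x => x
  | 3, x => 1 / 2 - x

noncomputable def quarterCenter : Fin 4 → ℝ
  | 0 => -(1 / 2)
  | 1 => 0
  | 2 => 0
  | 3 => 1 / 2

theorem abs_quarterCoord_sub (m : Fin 4) (x y : ℝ) :
    |quarterCoord m x - quarterCoord m y| = |x - y| := by
  fin_cases m <;> simp only [quarterCoord]
  · ring_nf
  · rw [abs_sub_comm]; ring_nf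
  · rw [abs_sub_comm]; ring_nf

theorem abs_sub_quarterCenter (m : Fin 4) (x : ℝ) :
    |x - quarterCenter m| = |quarterCoord m x| := by
  have h : quarterCoord m (quarterCenter m) = 0 := by
    fin_cases m <;> norm_num [quarterCoord, quarterCenter]
  rw [← abs_quarterCoord_sub m, h, sub_zero]

theorem exists_quarterCoord_mem {x : ℝ} (h₁ : -(1 / 2) ≤ x) (h₂ : x ≤ 1 / 2) :
    ∃ m, quarterCoord m x ∈ Icc (0 : ℝ) (1 / 4) := by
  rcases le_total x (-(1 / 4)) with h | h
  · exact ⟨0, by simp only [quarterCoord, mem_Icc]; constructor <;> linarith⟩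
  rcases le_total x 0 with h' | h'
  · exact ⟨1, by simp only [quarterCoord, mem_Icc]; constructor <;> linarith⟩
  rcases le_total x (1 / 4) with h'' | h''
  · exact ⟨2, by simp only [quarterCoord, mem_Icc]; constructor <;> linarith⟩
  · exact ⟨3, by simp only [quarterCoord, mem_Icc]; constructor <;> linarith⟩

theorem abs_sin_sq_sub_sin_sq_quarterCoord (m : Fin 4) (x y : ℝ) :
    |sin (π * quarterCoord m x) ^ 2 - sin (π * quarterCoord m y) ^ 2| =
      |sin (π * x) ^ 2 - sin (π * y) ^ 2| := by
  fin_cases m <;> simp only [quarterCoord]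
  · simp only [mul_add, show π * (1 / 2) = π / 2 by ring, sin_add_pi_div_two, cos_sq']
    rw [abs_sub_comm]; ring_nf
  · simp only [mul_neg, sin_neg, neg_sq]
  · simp only [mul_sub, show π * (1 / 2) = π / 2 by ring, sin_pi_div_two_sub, cos_sq']
    rw [abs_sub_comm]; ring_nf

theorem abs_sin_two_pi_mul_quarterCoord (m : Fin 4) (x : ℝ) :
    |sin (2 * π * quarterCoord m x)| = |sin (2 * π * x)| := by
  fin_cases m <;> simp only [quarterCoord]
  · rw [show 2 * π * (x + 1 / 2) = 2 * π * x + π by ring, sin_add_pi, abs_neg]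
  · rw [mul_neg, sin_neg, abs_neg]
  · rw [show 2 * π * (1 / 2 - x) = π - 2 * π * x by ring, sin_pi_sub]

theorem four_mul_quarterCoord_le_abs_sin {m : Fin 4} {x : ℝ}
    (hx : quarterCoord m x ∈ Icc (0 : ℝ) (1 / 4)) :
    4 * quarterCoord m x ≤ |sin (2 * π * x)| := by
  have h := two_mul_abs_le_abs_sin_pi_mul (u := 2 * quarterCoord m x)
    (by rw [abs_of_nonneg (by linarith [hx.1])]; linarith [hx.2])
  rw [abs_of_nonneg (by linarith [hx.1]), ← mul_assoc π, mul_comm π 2,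
    abs_sin_two_pi_mul_quarterCoord] at h
  linarith

theorem abs_sin_sq_sub_sin_sq_bounds_of_quarter {m : Fin 4} {x y : ℝ}
    (hx : quarterCoord m x ∈ Icc (0 : ℝ) (1 / 4)) (hy : quarterCoord m y ∈ Icc (0 : ℝ) (1 / 4)) :
    4 * (|x - y| * (quarterCoord m x + quarterCoord m y)) ≤ |sin (π * x) ^ 2 - sin (π * y) ^ 2| ∧
      |sin (π * x) ^ 2 - sin (π * y) ^ 2| ≤
        π ^ 2 * (|x - y| * (quarterCoord m x + quarterCoord m y)) := by
  rw [← abs_sin_sq_sub_sin_sq_quarterCoord m, ← abs_quarterCoord_sub m]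
  exact abs_sin_sq_sub_sin_sq_bounds hx hy

theorem eq_quarterCenter_of_sin_eq_zero {x : ℝ} (h₁ : -(1 / 2) ≤ x) (h₂ : x ≤ 1 / 2)
    (hsin : sin (2 * π * x) = 0) : ∃ m, x = quarterCenter m := by
  obtain ⟨m, hm⟩ := exists_quarterCoord_mem h₁ h₂
  have ht := four_mul_quarterCoord_le_abs_sin hm
  rw [hsin, abs_zero] at ht
  have hx := abs_sub_quarterCenter m x
  rw [abs_of_nonneg hm.1, le_antisymm (by linarith) hm.1, abs_eq_zero, sub_eq_zero] at hx
  exact ⟨m, hx⟩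

section LevelPieces

variable {d : ℕ}

def levelPiece (lam : ℝ) (i : Fin d) (q : Fin d → Fin 4) : Set (EuclideanSpace ℝ (Fin d)) :=
  {ξ | h0E ξ = lam ∧ ∀ j, quarterCoord (q j) (ξ j) ∈ Icc (0 : ℝ) (1 / 4) ∧
    quarterCoord (q j) (ξ j) ≤ quarterCoord (q i) (ξ i)}

noncomputable def quarterCorner (q : Fin d → Fin 4) : EuclideanSpace ℝ (Fin d) :=
  WithLp.toLp 2 fun j => quarterCenter (q j)

variable {lam : ℝ} {i : Fin d} {q : Fin d → Fin 4} {ξ η : EuclideanSpace ℝ (Fin d)}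

theorem Mlevel_subset_iUnion_levelPiece (hd : 0 < d) :
    Mlevel d lam ⊆ ⋃ p : Fin d × (Fin d → Fin 4), levelPiece lam p.1 p.2 := by
  rintro ξ ⟨hbox, hlevel⟩
  choose q hq using fun j => exists_quarterCoord_mem (hbox j).1 (hbox j).2.le
  have : Nonempty (Fin d) := ⟨⟨0, hd⟩⟩
  obtain ⟨i, hi⟩ := Finite.exists_max fun j => quarterCoord (q j) (ξ j)
  exact mem_iUnion.2 ⟨(i, q), hlevel, fun j => ⟨hq j, hi j⟩⟩

theorem eq_quarterCorner_of_mem_levelPiece (hξ : ξ ∈ levelPiece lam i q)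
    (h : quarterCoord (q i) (ξ i) ≤ 0) : ξ = quarterCorner q := by
  ext j
  have ht : quarterCoord (q j) (ξ j) = 0 := le_antisymm ((hξ.2 j).2.trans h) (hξ.2 j).1.1
  have hj := abs_sub_quarterCenter (q j) (ξ j)
  rwa [ht, abs_zero, abs_eq_zero, sub_eq_zero] at hj

theorem SigmaLevel_subset_range_quarterCorner :
    SigmaLevel d lam ⊆ range quarterCorner := by
  rintro ξ ⟨⟨hbox, -⟩, hgrad⟩
  have hsin (j : Fin d) : sin (2 * π * ξ j) = 0 := by
    have hj := congrArg (fun v : EuclideanSpace ℝ (Fin d) => v j) hgrad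
    simpa [gradh0, pi_ne_zero] using hj
  choose q hq using fun j => eq_quarterCenter_of_sin_eq_zero (hbox j).1 (hbox j).2.le (hsin j)
  exact ⟨q, by ext j; simp [quarterCorner, hq j]⟩

theorem four_mul_quarterCoord_le_norm_gradh0 {m : Fin 4}
    (hξ : quarterCoord m (ξ i) ∈ Icc (0 : ℝ) (1 / 4)) :
    4 * quarterCoord m (ξ i) ≤ ‖gradh0 ξ‖ := by
  have hi : |2 * π * sin (2 * π * ξ i)| ≤ ‖gradh0 ξ‖ := by
    simpa [gradh0] using PiLp.norm_apply_le (gradh0 ξ) i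
  rw [abs_mul, abs_of_pos (by positivity)] at hi
  have hsin := four_mul_quarterCoord_le_abs_sin hξ
  nlinarith [pi_gt_three, abs_nonneg (sin (2 * π * ξ i))]

theorem mul_abs_sub_le_of_mem_levelPiece (hξ : ξ ∈ levelPiece lam i q)
    (hη : η ∈ levelPiece lam i q) :
    4 * (|ξ i - η i| * (quarterCoord (q i) (ξ i) + quarterCoord (q i) (η i))) ≤
      π ^ 2 * ((∑ j ∈ Finset.univ.erase i, |ξ j - η j|) *
        (quarterCoord (q i) (ξ i) + quarterCoord (q i) (η i))) := by
  set s := quarterCoord (q i) (ξ i) + quarterCoord (q i) (η i)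
  have hlevel : sin (π * ξ i) ^ 2 - sin (π * η i) ^ 2 =
      ∑ j ∈ Finset.univ.erase i, (sin (π * η j) ^ 2 - sin (π * ξ j) ^ 2) := by
    have hsum : ∑ j, sin (π * ξ j) ^ 2 = ∑ j, sin (π * η j) ^ 2 := by
      have h := hξ.1.trans hη.1.symm
      simp only [h0E] at h
      linarith
    rw [← Finset.add_sum_erase _ _ (Finset.mem_univ i),
      ← Finset.add_sum_erase _ _ (Finset.mem_univ i)] at hsum
    rw [Finset.sum_sub_distrib]
    linarith
  calc 4 * (|ξ i - η i| * s) ≤ |sin (π * ξ i) ^ 2 - sin (π * η i) ^ 2| :=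
        (abs_sin_sq_sub_sin_sq_bounds_of_quarter (hξ.2 i).1 (hη.2 i).1).1
    _ ≤ ∑ j ∈ Finset.univ.erase i, |sin (π * ξ j) ^ 2 - sin (π * η j) ^ 2| := by
        rw [hlevel]
        refine (Finset.abs_sum_le_sum_abs _ _).trans_eq ?_
        simp only [abs_sub_comm]
    _ ≤ ∑ j ∈ Finset.univ.erase i, π ^ 2 * (|ξ j - η j| * s) := by
        gcongr with j
        refine (abs_sin_sq_sub_sin_sq_bounds_of_quarter (hξ.2 j).1 (hη.2 j).1).2.trans ?_
        gcongr
        exact add_le_add (hξ.2 j).2 (hη.2 j).2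
    _ = π ^ 2 * ((∑ j ∈ Finset.univ.erase i, |ξ j - η j|) * s) := by
        rw [← Finset.mul_sum, ← Finset.sum_mul]

theorem dist_le_of_mem_levelPiece (hξ : ξ ∈ levelPiece lam i q) (hη : η ∈ levelPiece lam i q) :
    dist ξ η ≤ √d * (π ^ 2 * d) * dist (dropCoord i ξ) (dropCoord i η) := by
  set D := dist (dropCoord i ξ) (dropCoord i η)
  set s := quarterCoord (q i) (ξ i) + quarterCoord (q i) (η i)
  have hs : 0 ≤ s := add_nonneg (hξ.2 i).1.1 (hη.2 i).1.1
  rcases hs.eq_or_lt with hs | hs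
  · have hξη : ξ = η := (eq_quarterCorner_of_mem_levelPiece hξ (by linarith [(hη.2 i).1.1])).trans
      (eq_quarterCorner_of_mem_levelPiece hη (by linarith [(hξ.2 i).1.1])).symm
    rw [hξη, dist_self]
    positivity
  have hD (j : Fin d) (hj : j ≠ i) : |ξ j - η j| ≤ D := by
    simpa [dropCoord, Real.dist_eq] using dist_le_pi_dist (dropCoord i ξ) (dropCoord i η) ⟨j, hj⟩
  have hD0 : 0 ≤ D := dist_nonneg
  have hd : (1 : ℝ) ≤ d := by exact_mod_cast Fin.pos i
  have hsum : ∑ j ∈ Finset.univ.erase i, |ξ j - η j| ≤ d * D := by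
    refine (Finset.sum_le_card_nsmul _ _ D fun j hj => hD j (Finset.ne_of_mem_erase hj)).trans ?_
    rw [nsmul_eq_mul]
    refine mul_le_mul_of_nonneg_right ?_ hD0
    exact_mod_cast (Finset.card_erase_le).trans (by simp)
  have hcoord (j : Fin d) : |ξ j - η j| ≤ π ^ 2 * d * D := by
    by_cases hj : j = i
    · subst hj
      have key := mul_abs_sub_le_of_mem_levelPiece hξ hη
      rw [← mul_assoc, ← mul_assoc] at key
      have h4 := le_of_mul_le_mul_right key hs
      have h0 : 0 ≤ π ^ 2 * (d * D) := by positivity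
      nlinarith [mul_le_mul_of_nonneg_left hsum (sq_nonneg π)]
    · have hπd : 1 ≤ π ^ 2 * d := by nlinarith [pi_gt_three]
      exact (hD j hj).trans (le_mul_of_one_le_left hD0 hπd)
  calc dist ξ η ≤ √(Fintype.card (Fin d)) * (π ^ 2 * d * D) :=
        dist_le_sqrt_card_mul_of_abs_sub_le (by positivity) hcoord
    _ = √d * (π ^ 2 * d) * D := by rw [Fintype.card_fin]; ring

theorem setLIntegral_inv_norm_gradh0_levelPiece_lt_top (hd : 3 ≤ d) :
    ∫⁻ ξ in levelPiece lam i q, (ENNReal.ofReal ‖gradh0 ξ‖)⁻¹ ∂μH[(d : ℝ) - 1] < ∞ := by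
  set K : ℝ≥0 := ⟨√d * (π ^ 2 * d), by positivity⟩
  refine setLIntegral_lt_top_of_dyadic_shells (φ := fun ξ => 4 * quarterCoord (q i) (ξ i))
    (C := (K * 2⁻¹) ^ (d - 1)) (fun ξ hξ => ?_) (fun ξ hξ => ?_) ?_ (fun n => ?_)
  · exact ENNReal.inv_le_inv.2
      (ENNReal.ofReal_le_ofReal (four_mul_quarterCoord_le_norm_gradh0 (hξ.2 i).1))
  · linarith [(hξ.2 i).1.2]
  · refine measure_mono_null (fun ξ hξ => ?_)
      ((finite_singleton (quarterCorner q)).hausdorffMeasure_eq_zero (by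
        have : (3 : ℝ) ≤ d := by exact_mod_cast hd
        linarith))
    exact eq_quarterCorner_of_mem_levelPiece hξ.1 (by linarith [hξ.2])
  · have hgraph := hausdorffMeasure_le_of_lipschitz_graph i (K := K)
      (S := {ξ ∈ levelPiece lam i q | (2⁻¹ : ℝ) ^ (n + 1) < 4 * quarterCoord (q i) (ξ i) ∧
        4 * quarterCoord (q i) (ξ i) ≤ 2⁻¹ ^ n})
      (fun ξ hξ η hη => dist_le_of_mem_levelPiece hξ.1 hη.1) (p := quarterCorner q)
      (r := 2⁻¹ ^ n / 4) (by positivity) (fun ξ hξ j _ => ?_)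
    · rw [Fintype.card_fin] at hgraph
      refine hgraph.trans (ENNReal.ofReal_le_ofReal ?_)
      rw [show (K : ℝ) * (2 * (2⁻¹ ^ n / 4)) = K * 2⁻¹ * 2⁻¹ ^ n by ring, mul_pow]
      refine mul_le_mul_of_nonneg_left (pow_le_pow_of_le_one (by positivity)
        (pow_le_one₀ (by norm_num) (by norm_num)) (by omega)) (by positivity)
    · change |ξ j - quarterCenter (q j)| ≤ _
      rw [abs_sub_quarterCenter, abs_of_nonneg (hξ.1.2 j).1.1]
      linarith [(hξ.1.2 j).2, hξ.2.2]

end LevelPieces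

theorem statement10_general (d : ℕ) (hd : 3 ≤ d) (lam : ℝ) :
    (∫⁻ ξ in Mlevel d lam, (ENNReal.ofReal ‖gradh0 ξ‖)⁻¹ ∂(μH[(d : ℝ) - 1])) < ⊤ ∧
    (SigmaLevel d lam).Finite ∧
    μH[(d : ℝ) - 1] (SigmaLevel d lam) = 0 ∧
    (∫⁻ ξ in SigmaLevel d lam, (ENNReal.ofReal ‖gradh0 ξ‖)⁻¹ ∂(μH[(d : ℝ) - 1])) = 0 := by
  have hfin : (SigmaLevel d lam).Finite :=
    (finite_range quarterCorner).subset SigmaLevel_subset_range_quarterCorner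
  have hnull : μH[(d : ℝ) - 1] (SigmaLevel d lam) = 0 :=
    hfin.hausdorffMeasure_eq_zero (by
      have : (3 : ℝ) ≤ d := by exact_mod_cast hd
      linarith)
  refine ⟨?_, hfin, hnull, setLIntegral_measure_zero _ _ hnull⟩
  calc ∫⁻ ξ in Mlevel d lam, (ENNReal.ofReal ‖gradh0 ξ‖)⁻¹ ∂μH[(d : ℝ) - 1]
      ≤ ∫⁻ ξ in ⋃ p : Fin d × (Fin d → Fin 4), levelPiece lam p.1 p.2,
          (ENNReal.ofReal ‖gradh0 ξ‖)⁻¹ ∂μH[(d : ℝ) - 1] :=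
        lintegral_mono_set (Mlevel_subset_iUnion_levelPiece (by omega))
    _ ≤ ∑' p : Fin d × (Fin d → Fin 4),
          ∫⁻ ξ in levelPiece lam p.1 p.2, (ENNReal.ofReal ‖gradh0 ξ‖)⁻¹ ∂μH[(d : ℝ) - 1] :=
        lintegral_iUnion_le _ _
    _ < ⊤ := by
        rw [tsum_fintype]
        exact ENNReal.sum_lt_top.2 fun _ _ => setLIntegral_inv_norm_gradh0_levelPiece_lt_top hd

theorem statement10 (d k : ℕ) (hd : 3 ≤ d) (hk1 : 1 ≤ k) (hkd : k ≤ d - 1)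
    (lam : ℝ) (hlam : lam = 4 * k) :
    (∫⁻ ξ in Mlevel d lam, (ENNReal.ofReal ‖gradh0 ξ‖)⁻¹ ∂(μH[(d : ℝ) - 1])) < ⊤ ∧
    (SigmaLevel d lam).Finite ∧
    μH[(d : ℝ) - 1] (SigmaLevel d lam) = 0 ∧
    (∫⁻ ξ in SigmaLevel d lam, (ENNReal.ofReal ‖gradh0 ξ‖)⁻¹ ∂(μH[(d : ℝ) - 1])) = 0 :=
  statement10_general d hd lam
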